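/- Let (μ, P, H) be an admissible triple in ℝ³ whose support is contained in the closed unit ball, such that H is perpendicular, i.e. (P x)(H x) = 0 for μ-a.e. x. If equality ∫ |H|² dμ = μ(ℝ³) holds, then supp μ is contained in the unit sphere S² = {x : |x| = 1} and for μ-a.e. x one has |x| = 1, (P x) x = 0 and H x = −x; in particular |H x| = 1 μ-a.e. -/

import Mathlib

open MeasureTheory Metric Filter
open scoped RealInnerProductSpace ENNReal

noncomputable section

/-- Euclidean three-space. -/
abbrev E3 : Type := EuclideanSpace ℝ (Fin 3)

/-- The support of a measure: points all of whose neighbourhoods have positive measure. -/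
def mSupport (μ : Measure E3) : Set E3 := {x | ∀ r > 0, 0 < μ (ball x r)}

/-- An admissible triple `(μ, P, H)`: a finite compactly supported Borel measure, a measurable
family of maps which μ-a.e. are orthogonal projections onto 2-dimensional planes (idempotent,
symmetric, of rank two), and an `L²(μ)` generalized mean curvature `H` satisfying the first
variation identity `∫ trace(P x ∘ DX x) dμ = -2 ∫ ⟨X x, H x⟩ dμ` for every compactly supported
`C¹` vector field `X`. -/
structure IsAdmissible (μ : Measure E3) (P : E3 → E3 →L[ℝ] E3) (H : E3 → E3) : Prop where
  finite : IsFiniteMeasure μ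
  compact_support : IsCompact (mSupport μ)
  meas_P : ∀ v : E3, Measurable fun x => P x v
  meas_H : AEStronglyMeasurable H μ
  proj_ae : ∀ᵐ x ∂μ, (P x).comp (P x) = P x ∧
      (∀ u v : E3, ⟪P x u, v⟫ = ⟪u, P x v⟫) ∧
      Module.finrank ℝ (LinearMap.range ((P x : E3 →ₗ[ℝ] E3))) = 2
  memL2 : MemLp H 2 μ
  first_variation : ∀ X : E3 → E3, ContDiff ℝ 1 X → HasCompactSupport X →
      ∫ x, LinearMap.trace ℝ E3 ((P x).comp (fderiv ℝ X x) : E3 →ₗ[ℝ] E3) ∂μ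
        = -2 * ∫ x, ⟪X x, H x⟫ ∂μ

/-- The generalized mean curvature is perpendicular: `(P x) (H x) = 0` for μ-a.e. `x`. -/
def IsPerp (μ : Measure E3) (P : E3 → E3 →L[ℝ] E3) (H : E3 → E3) : Prop :=
  ∀ᵐ x ∂μ, P x (H x) = 0

/-- The Willmore energy of an admissible triple. -/
def Willmore (μ : Measure E3) (H : E3 → E3) : ℝ := ∫ x, ‖H x‖ ^ 2 ∂μ

/-- The mass of a measure. -/
def Mass (μ : Measure E3) : ℝ := (μ Set.univ).toReal

/-!
Testing the first variation identity against the position vector field `X x = x` (cut off far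
from the unit ball) gives `∫ ⟪x, H x⟫ dμ = -μ(ℝ³)`, because `P x` has trace `2`. Expanding the
square then shows `W(μ) - μ(ℝ³) = ∫ ‖x + H x‖² dμ + ∫ (1 - ‖x‖²) dμ`, where both integrands are
nonnegative when `supp μ` lies in the closed unit ball. Equality forces `H x = -x` and `‖x‖ = 1`
almost everywhere, and perpendicularity of `H` then gives `P x x = -P x (H x) = 0`.
-/

open Module Topology

theorem mSupport_eq_support (μ : Measure E3) : mSupport μ = μ.support := by
  ext x
  exact nhds_basis_ball.mem_measureSupport.symm

theorem ae_mem_of_mSupport_subset {μ : Measure E3} {s : Set E3} (h : mSupport μ ⊆ s) :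
    ∀ᵐ x ∂μ, x ∈ s :=
  mem_of_superset (mSupport_eq_support μ ▸ Measure.support_mem_ae) h

theorem mSupport_subset_of_ae_mem {μ : Measure E3} {s : Set E3} (hs : IsClosed s)
    (h : ∀ᵐ x ∂μ, x ∈ s) : mSupport μ ⊆ s :=
  mSupport_eq_support μ ▸ Measure.support_subset_of_isClosed hs h

theorem memLp_id_of_mSupport_subset_closedBall {μ : Measure E3} [IsFiniteMeasure μ] {R : ℝ}
    (p : ℝ≥0∞) (h : mSupport μ ⊆ closedBall 0 R) : MemLp (fun x : E3 => x) p μ :=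
  (memLp_top_of_bound aestronglyMeasurable_id R
    (by simpa only [mem_closedBall_zero_iff, id] using ae_mem_of_mSupport_subset h)).mono_exponent
      le_top

theorem integral_const_eq_mul_mass (μ : Measure E3) (c : ℝ) : ∫ _, c ∂μ = c * Mass μ :=
  (integral_const c).trans (mul_comm _ _)

theorem LinearMap.trace_eq_finrank_range_of_isIdempotentElem {K V : Type*} [Field K]
    [AddCommGroup V] [Module K V] [FiniteDimensional K V] {f : V →ₗ[K] V}
    (hf : IsIdempotentElem f) : trace K V f = finrank K (range f) :=
  (IsIdempotentElem.isProj_range f hf).trace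

theorem exists_contDiff_hasCompactSupport_eventuallyEq_id {E : Type*} [NormedAddCommGroup E]
    [NormedSpace ℝ E] [HasContDiffBump E] [FiniteDimensional ℝ E] (n : ℕ∞) {r : ℝ}
    (hr : 0 < r) :
    ∃ X : E → E, ContDiff ℝ n X ∧ HasCompactSupport X ∧ ∀ x ∈ ball (0 : E) r, X =ᶠ[𝓝 x] id := by
  let φ : ContDiffBump (0 : E) := ⟨r, r + 1, hr, by linarith⟩
  refine ⟨fun y => φ y • y, φ.contDiff.smul contDiff_id, φ.hasCompactSupport.smul_right,
    fun x hx => ?_⟩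
  filter_upwards [φ.eventuallyEq_one_of_mem_ball hx] with y hy
  simp [hy]

section L2

variable {α F : Type*} [MeasurableSpace α] {μ : Measure α} [NormedAddCommGroup F] {f g : α → F}

theorem MeasureTheory.MemLp.integrable_norm_sq (hf : MemLp f 2 μ) :
    Integrable (fun x => ‖f x‖ ^ 2) μ :=
  (memLp_two_iff_integrable_sq_norm hf.1).1 hf

variable [InnerProductSpace ℝ F]

theorem MeasureTheory.MemLp.integrable_inner (hf : MemLp f 2 μ) (hg : MemLp g 2 μ) :
    Integrable (fun x => ⟪f x, g x⟫) μ := by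
  refine (L2.integrable_inner (𝕜 := ℝ) (hf.toLp f) (hg.toLp g)).congr ?_
  filter_upwards [hf.coeFn_toLp, hg.coeFn_toLp] with x hfx hgx
  rw [hfx, hgx]

theorem integral_norm_add_sq (hf : MemLp f 2 μ) (hg : MemLp g 2 μ) :
    ∫ x, ‖f x + g x‖ ^ 2 ∂μ
      = ∫ x, ‖f x‖ ^ 2 ∂μ + 2 * ∫ x, ⟪f x, g x⟫ ∂μ + ∫ x, ‖g x‖ ^ 2 ∂μ := by
  have hfg := (hf.integrable_inner hg).const_mul 2
  have hsum : Integrable (fun x => ‖f x‖ ^ 2 + 2 * ⟪f x, g x⟫) μ := hf.integrable_norm_sq.add hfg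
  simp_rw [norm_add_sq_real]
  rw [integral_add hsum hg.integrable_norm_sq, integral_add hf.integrable_norm_sq hfg,
    integral_const_mul]

end L2

namespace IsAdmissible

variable {μ : Measure E3} {P : E3 → E3 →L[ℝ] E3} {H : E3 → E3}

theorem ae_trace_eq_two (hadm : IsAdmissible μ P H) :
    ∀ᵐ x ∂μ, LinearMap.trace ℝ E3 (P x : E3 →ₗ[ℝ] E3) = 2 := by
  filter_upwards [hadm.proj_ae] with x hproj
  obtain ⟨hidem, -, hrank⟩ := hproj
  have : IsIdempotentElem (P x : E3 →ₗ[ℝ] E3) := congrArg ContinuousLinearMap.toLinearMap hidem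
  rw [LinearMap.trace_eq_finrank_range_of_isIdempotentElem this, hrank, Nat.cast_ofNat]

theorem integral_inner_self_eq (hadm : IsAdmissible μ P H) {R : ℝ}
    (hsupp : mSupport μ ⊆ closedBall 0 R) : ∫ x, ⟪x, H x⟫ ∂μ = -Mass μ := by
  obtain ⟨X, hX, hXc, hXid⟩ :=
    exists_contDiff_hasCompactSupport_eventuallyEq_id (E := E3) 1 (by positivity : 0 < |R| + 1)
  have hnear : ∀ᵐ x ∂μ, X =ᶠ[𝓝 x] id := by
    filter_upwards [ae_mem_of_mSupport_subset hsupp] with x hx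
    exact hXid x (closedBall_subset_ball (by linarith [le_abs_self R]) hx)
  have htrace : ∫ x, LinearMap.trace ℝ E3 ((P x).comp (fderiv ℝ X x) : E3 →ₗ[ℝ] E3) ∂μ
      = 2 * Mass μ := by
    rw [← integral_const_eq_mul_mass]
    refine integral_congr_ae ?_
    filter_upwards [hnear, hadm.ae_trace_eq_two] with x hx htr
    rw [hx.fderiv_eq, fderiv_id, ContinuousLinearMap.comp_id, htr]
  have hinner : ∫ x, ⟪X x, H x⟫ ∂μ = ∫ x, ⟪x, H x⟫ ∂μ := by
    refine integral_congr_ae ?_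
    filter_upwards [hnear] with x hx
    rw [hx.eq_of_nhds, id]
  linarith [hadm.first_variation X hX hXc]

theorem willmore_sub_mass_eq (hadm : IsAdmissible μ P H) (hsupp : mSupport μ ⊆ closedBall 0 1) :
    Willmore μ H - Mass μ = ∫ x, ‖x + H x‖ ^ 2 ∂μ + ∫ x, (1 - ‖x‖ ^ 2) ∂μ := by
  have := hadm.finite
  have hid := memLp_id_of_mSupport_subset_closedBall 2 hsupp
  rw [integral_norm_add_sq hid hadm.memL2, hadm.integral_inner_self_eq hsupp,
    integral_sub (integrable_const 1) hid.integrable_norm_sq, integral_const_eq_mul_mass, Willmore]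
  ring

theorem ae_eq_neg_and_norm_eq_one_of_willmore_eq_mass (hadm : IsAdmissible μ P H)
    (hsupp : mSupport μ ⊆ closedBall 0 1) (heq : Willmore μ H = Mass μ) :
    ∀ᵐ x ∂μ, H x = -x ∧ ‖x‖ = 1 := by
  have := hadm.finite
  have hid := memLp_id_of_mSupport_subset_closedBall 2 hsupp
  have hball : ∀ᵐ x ∂μ, ‖x‖ ≤ 1 := by
    simpa only [mem_closedBall_zero_iff] using ae_mem_of_mSupport_subset hsupp
  have hA : 0 ≤ᵐ[μ] fun x => ‖x + H x‖ ^ 2 := ae_of_all _ fun x => sq_nonneg _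
  have hB : 0 ≤ᵐ[μ] fun x : E3 => 1 - ‖x‖ ^ 2 := by
    filter_upwards [hball] with x hx
    exact sub_nonneg.2 (pow_le_one₀ (norm_nonneg x) hx)
  have hAint := (hid.add hadm.memL2).integrable_norm_sq
  have hBint := (integrable_const 1).sub hid.integrable_norm_sq
  have hsum := hadm.willmore_sub_mass_eq hsupp
  rw [heq, sub_self, eq_comm, add_eq_zero_iff_of_nonneg (integral_nonneg_of_ae hA)
    (integral_nonneg_of_ae hB)] at hsum
  filter_upwards [(integral_eq_zero_iff_of_nonneg_ae hA hAint).1 hsum.1,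
    (integral_eq_zero_iff_of_nonneg_ae hB hBint).1 hsum.2] with x hxH hx
  simp only [Pi.zero_apply, sq_eq_zero_iff, norm_eq_zero, sub_eq_zero] at hxH hx
  exact ⟨eq_neg_of_add_eq_zero_right hxH,
    (pow_eq_one_iff_of_nonneg (norm_nonneg x) two_ne_zero).1 hx.symm⟩

end IsAdmissible

/-- equality analysis in the Willmore-vs-Area theorem. If the support of an
admissible triple with perpendicular mean curvature lies in the closed unit ball and
`∫ |H|² dμ = μ(ℝ³)`, then the support lies on the unit sphere and μ-a.e. `|x| = 1`,
`(P x) x = 0`, `H x = -x`; in particular `|H x| = 1` μ-a.e. -/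
theorem willmore_vs_area_equality (μ : Measure E3) (P : E3 → E3 →L[ℝ] E3) (H : E3 → E3)
    (hadm : IsAdmissible μ P H) (hsupp : mSupport μ ⊆ closedBall 0 1)
    (hperp : IsPerp μ P H) (heq : Willmore μ H = Mass μ) :
    mSupport μ ⊆ sphere (0 : E3) 1 ∧
      ∀ᵐ x ∂μ, ‖x‖ = 1 ∧ P x x = 0 ∧ H x = -x ∧ ‖H x‖ = 1 := by
  have hmain : ∀ᵐ x ∂μ, ‖x‖ = 1 ∧ P x x = 0 ∧ H x = -x ∧ ‖H x‖ = 1 := by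
    filter_upwards [hadm.ae_eq_neg_and_norm_eq_one_of_willmore_eq_mass hsupp heq, hperp]
      with x hx hPH
    obtain ⟨hH, hnorm⟩ := hx
    refine ⟨hnorm, ?_, hH, by rw [hH, norm_neg, hnorm]⟩
    calc P x x = -P x (H x) := by rw [hH, map_neg, neg_neg]
      _ = 0 := by rw [hPH, neg_zero]
  refine ⟨mSupport_subset_of_ae_mem isClosed_sphere ?_, hmain⟩
  filter_upwards [hmain] with x hx using mem_sphere_zero_iff_norm.2 hx.1
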